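/- arXiv:2401.08729 — 2 statements merged into one kernel-verified Lean document; each statement's English description precedes it below -/
import Mathlib

section
/- Let A be a unital C*-algebra, equipped with the canonical partial order in which x ≤ y means y − x is a positive element (a self-adjoint element of the form z*z). Let S be a nonempty finite index set, n ≥ 1 a natural number, and let a, b : S × {1,…,n} → A be two families of elements of A. Then ∑_{I∈S} ( ∑_{i=1}^{n} a(I,i)·b(I,i) )* ( ∑_{i=1}^{n} a(I,i)·b(I,i) ) ≤ ( max_{I∈S} ∑_{i=1}^{n} ‖a(I,i)‖² ) · ∑_{I∈S} ∑_{i=1}^{n} b(I,i)*·b(I,i), where ‖·‖ is the C*-norm of A and the scalar on the right acts by scalar multiplication. -/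
/-!
View the families `(a i)` and `(star (b i))` as vectors `x, y` of the Hilbert `A`-module `Aⁿ`,
whose `A`-valued inner product is `⟪u, v⟫ = ∑ i, v i * star (u i)`. Then `⟪y, x⟫ = ∑ i, a i * b i`
and `⟪y, y⟫ = ∑ i, star (b i) * b i`, so the Cauchy–Schwarz inequality
`⟪x, y⟫ * ⟪y, x⟫ ≤ ‖x‖ ^ 2 • ⟪y, y⟫` of Hilbert C⋆-modules, together with
`‖x‖ ^ 2 ≤ ∑ i, ‖a i‖ ^ 2`, gives the inequality for each block `I`; summing over `I` and bounding
each scalar by the maximum gives the theorem.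
-/

open scoped ComplexOrder InnerProductSpace
open WithCStarModule CStarModule

section
variable {A : Type*} [NonUnitalCStarAlgebra A] [PartialOrder A] [StarOrderedRing A]
  {ι : Type*} [Fintype ι]

lemma norm_sq_equiv_symm_pi_le (a : ι → A) :
    ‖(equiv A (ι → A)).symm a‖ ^ 2 ≤ ∑ i, ‖a i‖ ^ 2 := by
  rw [pi_norm_sq]
  refine (norm_sum_le _ _).trans_eq (Finset.sum_congr rfl fun i _ => ?_)
  exact (norm_sq_eq A (x := a i)).symm

lemma star_sum_mul_mul_sum_le (a b : ι → A) :
    star (∑ i, a i * b i) * (∑ i, a i * b i) ≤ (∑ i, ‖a i‖ ^ 2) • ∑ i, star (b i) * b i := by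
  let x : C⋆ᵐᵒᵈ(A, ι → A) := (equiv A _).symm a
  let y : C⋆ᵐᵒᵈ(A, ι → A) := (equiv A _).symm fun i => star (b i)
  have hyx : ⟪y, x⟫_A = ∑ i, a i * b i := by simp [x, y, pi_inner, inner_def]
  have hyy : ⟪y, y⟫_A = ∑ i, star (b i) * b i := by simp [y, pi_inner, inner_def]
  have hyy_nonneg : (0 : A) ≤ ⟪y, y⟫_A := inner_self_nonneg
  calc star (∑ i, a i * b i) * (∑ i, a i * b i) = ⟪x, y⟫_A * ⟪y, x⟫_A := by
        rw [← star_inner y x, hyx]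
    _ ≤ ‖x‖ ^ 2 • ⟪y, y⟫_A := inner_mul_inner_swap_le
    _ ≤ (∑ i, ‖a i‖ ^ 2) • ⟪y, y⟫_A :=
        smul_le_smul_of_nonneg_right (norm_sq_equiv_symm_pi_le a) hyy_nonneg
    _ = (∑ i, ‖a i‖ ^ 2) • ∑ i, star (b i) * b i := by rw [hyy]

end

theorem cstar_cauchy_schwarz_families_general
    (A : Type*) [NormedRing A] [StarRing A] [CStarRing A]
    [NormedAlgebra ℂ A] [StarModule ℂ A] [CompleteSpace A]
    [PartialOrder A] [StarOrderedRing A]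
    (S : Type*) [Fintype S] [Nonempty S] (n : ℕ)
    (a b : S → Fin n → A) :
    ∑ I : S, star (∑ i : Fin n, a I i * b I i) * (∑ i : Fin n, a I i * b I i) ≤
      (Finset.univ.sup' Finset.univ_nonempty fun I : S => ∑ i : Fin n, ‖a I i‖ ^ 2) •
        ∑ I : S, ∑ i : Fin n, star (b I i) * b I i := by
  let _ : CStarAlgebra A := {}
  rw [Finset.smul_sum]
  refine Finset.sum_le_sum fun I _ => (star_sum_mul_mul_sum_le (a I) (b I)).trans ?_
  exact smul_le_smul_of_nonneg_right
    (Finset.le_sup' (fun I => ∑ i, ‖a I i‖ ^ 2) (Finset.mem_univ I))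
    (Finset.sum_nonneg fun i _ => star_mul_self_nonneg (b I i))

/-- In a unital C*-algebra with its canonical order, for finite families
`a, b : S × {1,…,n} → A` one has
`∑_I |∑_i a(I,i)·b(I,i)|² ≤ (max_I ∑_i ‖a(I,i)‖²) · ∑_I ∑_i b(I,i)*·b(I,i)`. -/
theorem cstar_cauchy_schwarz_families
    (A : Type*) [NormedRing A] [StarRing A] [CStarRing A]
    [NormedAlgebra ℂ A] [StarModule ℂ A] [CompleteSpace A]
    [PartialOrder A] [StarOrderedRing A]
    (S : Type*) [Fintype S] [Nonempty S] (n : ℕ) (hn : 1 ≤ n)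
    (a b : S → Fin n → A) :
    ∑ I : S, star (∑ i : Fin n, a I i * b I i) * (∑ i : Fin n, a I i * b I i) ≤
      (Finset.univ.sup' Finset.univ_nonempty fun I : S => ∑ i : Fin n, ‖a I i‖ ^ 2) •
        ∑ I : S, ∑ i : Fin n, star (b I i) * b I i :=
  cstar_cauchy_schwarz_families_general A S n a b
end

section
/- Let d ≥ 2 be an integer and let a, b, f be finite Haar polynomials on ℝ (finite ℂ-linear combinations of Haar functions h_I^i with I ∈ 𝒟, 1 ≤ i ≤ d−1), so that all the sums below have only finitely many nonzero terms. Define π_b(f) = ∑_{k∈ℤ} d_k b·f_{k−1}, Λ_b(f) = ∑_{k∈ℤ} d_k b·d_k f, R_b(f) = ∑_{k∈ℤ} b_{k−1}·d_k f, and V_{a,b}(f) = ∑_{k∈ℤ} d_k a · E_{k−1}( ∑_{j≥k} d_j b·d_j f ). Then the commutator identity [π_a, R_b](f) = π_a(R_b(f)) − R_b(π_a(f)) = −π_a( π_b(f) + Λ_b(f) ) + V_{a,b}(f) holds pointwise almost everywhere. -/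
open MeasureTheory Set Filter

noncomputable section

/-- The `d`-adic interval `I_{n,k} = [k·d^{-n}, (k+1)·d^{-n})`. -/
def dyadicI (d : ℕ) (n k : ℤ) : Set ℝ :=
  Set.Ico ((k : ℝ) * (d : ℝ) ^ (-n)) (((k : ℝ) + 1) * (d : ℝ) ^ (-n))

/-- The index `k` such that `x ∈ I_{n,k}`. -/
def dIdx (d : ℕ) (n : ℤ) (x : ℝ) : ℤ := ⌊x * (d : ℝ) ^ n⌋

/-- Conditional expectation `E_n g` with respect to the `d`-adic filtration:
on each `d`-adic interval of generation `n` it is the average of `g` over that interval. -/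
def condExpD (d : ℕ) (n : ℤ) (g : ℝ → ℂ) : ℝ → ℂ :=
  fun x => ((d : ℂ) ^ n) * ∫ t in dyadicI d n (dIdx d n x), g t

/-- The real-valued version of the conditional expectation `E_n`. -/
def condExpDR (d : ℕ) (n : ℤ) (g : ℝ → ℝ) : ℝ → ℝ :=
  fun x => ((d : ℝ) ^ n) * ∫ t in dyadicI d n (dIdx d n x), g t

/-- Martingale difference `d_n g = E_n g - E_{n-1} g`. -/
def mdiff (d : ℕ) (n : ℤ) (g : ℝ → ℂ) : ℝ → ℂ :=
  fun x => condExpD d n g x - condExpD d (n - 1) g x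

/-- The average `(1/m(I)) ∫_I g` over `I = I_{n,k}`. -/
def avgI (d : ℕ) (n k : ℤ) (g : ℝ → ℂ) : ℂ :=
  ((d : ℂ) ^ n) * ∫ t in dyadicI d n k, g t

/-- The BMO ratio `((1/m(I)) ∫_I |b - avg_I b|² dm)^{1/2}` for `I = I_{n,k}`. -/
def bmoRatio (d : ℕ) (b : ℝ → ℂ) (n k : ℤ) : ℝ :=
  Real.sqrt (((d : ℝ) ^ n) * ∫ x in dyadicI d n k, ‖b x - avgI d n k b‖ ^ 2)

/-- The `d`-adic BMO norm. -/
def bmoNorm (d : ℕ) (b : ℝ → ℂ) : ℝ :=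
  ⨆ q : ℤ × ℤ, bmoRatio d b q.1 q.2

/-- Membership in `BMO^d(ℝ)`. -/
def MemBMOd (d : ℕ) (b : ℝ → ℂ) : Prop :=
  MeasureTheory.LocallyIntegrable b volume ∧
    BddAbove (Set.range fun q : ℤ × ℤ => bmoRatio d b q.1 q.2)

end

noncomputable section

/-- The Haar function `h_I^i` for `I = I_{n,k}`: for `1 ≤ i ≤ d-1`,
`h_I^i = d^{n/2} ∑_{j=0}^{d-1} ω^{i(j+1)} 1_{I_{n+1, kd+j}}` with `ω = exp(2πi/d)`. -/
def haar (d : ℕ) (n k : ℤ) (i : ℕ) : ℝ → ℂ :=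
  fun x => (Real.sqrt ((d : ℝ) ^ n) : ℂ) *
    ∑ j ∈ Finset.range d,
      Complex.exp (2 * (Real.pi : ℂ) * Complex.I / (d : ℂ)) ^ (i * (j + 1)) *
        (dyadicI d (n + 1) (k * d + j)).indicator (fun _ => (1 : ℂ)) x

/-- A finite Haar polynomial: a finite ℂ-linear combination of Haar functions `h_I^i`
with `I ∈ 𝒟`, `1 ≤ i ≤ d-1`. -/
def IsHaarPoly (d : ℕ) (g : ℝ → ℂ) : Prop :=
  ∃ (s : Finset (ℤ × ℤ × ℕ)) (c : ℤ × ℤ × ℕ → ℂ),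
    (∀ q ∈ s, 1 ≤ q.2.2 ∧ q.2.2 ≤ d - 1) ∧
    g = fun x => ∑ q ∈ s, c q * haar d q.1 q.2.1 q.2.2 x

/-- The paraproduct `π_b(f) = ∑_k d_k b · f_{k-1}`. -/
def piOp (d : ℕ) (b f : ℝ → ℂ) : ℝ → ℂ :=
  fun x => ∑' k : ℤ, mdiff d k b x * condExpD d (k - 1) f x

/-- The diagonal paraproduct `Λ_b(f) = ∑_k d_k b · d_k f`. -/
def lamOp (d : ℕ) (b f : ℝ → ℂ) : ℝ → ℂ :=
  fun x => ∑' k : ℤ, mdiff d k b x * mdiff d k f x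

/-- The third paraproduct `R_b(f) = ∑_k b_{k-1} · d_k f`. -/
def rOp (d : ℕ) (b f : ℝ → ℂ) : ℝ → ℂ :=
  fun x => ∑' k : ℤ, condExpD d (k - 1) b x * mdiff d k f x

/-- The operator `V_{a,b}(f) = ∑_k d_k a · E_{k-1}(∑_{j ≥ k} d_j b · d_j f)`. -/
def vOp (d : ℕ) (a b f : ℝ → ℂ) : ℝ → ℂ :=
  fun x => ∑' k : ℤ, mdiff d k a x *
    condExpD d (k - 1)
      (fun t => ∑' j : ℤ, if k ≤ j then mdiff d j b t * mdiff d j f t else 0) x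

end


/-!
For finite Haar polynomials all martingale differences vanish outside a finite band of
generations `lo < k ≤ hi`, and `E_lo b = 0`, so every series is a finite sum. Since `E_m` fixes
`F_m`-measurable functions, pulls them out of products and satisfies the tower property,
`E_m (u · d_j w) = 1_{j ≤ m} · u · d_j w` whenever `u` is `F_{j-1}`-measurable. This gives
`d_k (π_a f) = d_k a · f_{k-1}` and `E_{k-1} (R_b f) = ∑_{j<k} b_{j-1} d_j f`, while
`π_b f + Λ_b f = ∑_j d_j b · f_j` with `E_{k-1} (d_j b · f_j) = E_{k-1} (d_j b · d_j f)` for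
`j ≥ k`. For each `k` the identity then reduces to the summed discrete product rule
`∑_{j<k} (b_{j-1} d_j f + d_j b · f_j) = b_{k-1} f_{k-1}`.
-/

variable {d : ℕ}

section DAdicIntervals

lemma mem_dyadicI_iff (hd : 0 < d) {n k : ℤ} {x : ℝ} :
    x ∈ dyadicI d n k ↔ dIdx d n x = k := by
  have hdn : (0 : ℝ) < (d : ℝ) ^ n := zpow_pos (by exact_mod_cast hd) n
  rw [dyadicI, dIdx, Set.mem_Ico, zpow_neg, ← div_eq_mul_inv, ← div_eq_mul_inv,
    div_le_iff₀ hdn, lt_div_iff₀ hdn, Int.floor_eq_iff]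

lemma dIdx_eq_ediv (hd : 0 < d) {m n : ℤ} (hmn : m ≤ n) (x : ℝ) :
    dIdx d m x = dIdx d n x / (d : ℤ) ^ (n - m).toNat := by
  have hd' : (d : ℝ) ≠ 0 := by exact_mod_cast hd.ne'
  have hpow : (((d ^ (n - m).toNat : ℕ) : ℝ)) = (d : ℝ) ^ (n - m) := by
    rw [Nat.cast_pow, ← zpow_natCast, Int.toNat_of_nonneg (by omega)]
  have hx : x * (d : ℝ) ^ m = x * (d : ℝ) ^ n / ((d ^ (n - m).toNat : ℕ) : ℝ) := by
    rw [hpow, mul_div_assoc, ← zpow_sub₀ hd', sub_sub_cancel]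
  rw [dIdx, dIdx, hx, Int.floor_div_natCast]
  push_cast
  rfl

lemma dIdx_eq_ediv_of_mem (hd : 0 < d) {m n k : ℤ} (hmn : m ≤ n) {x : ℝ}
    (hx : x ∈ dyadicI d n k) : dIdx d m x = k / (d : ℤ) ^ (n - m).toNat := by
  rw [dIdx_eq_ediv hd hmn, (mem_dyadicI_iff hd).1 hx]

lemma dyadicI_inter_dyadicI (hd : 0 < d) {m n : ℤ} (hmn : m ≤ n) (j k : ℤ) :
    dyadicI d m j ∩ dyadicI d n k =
      if j = k / (d : ℤ) ^ (n - m).toNat then dyadicI d n k else ∅ := by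
  ext x
  split_ifs with hj
  · refine ⟨fun hx => hx.2, fun hx => ⟨?_, hx⟩⟩
    rw [mem_dyadicI_iff hd, dIdx_eq_ediv_of_mem hd hmn hx, hj]
  · refine ⟨fun hx => hj ?_, fun hx => hx.elim⟩
    rw [← (mem_dyadicI_iff hd).1 hx.1, dIdx_eq_ediv_of_mem hd hmn hx.2]

lemma measurableSet_dyadicI (d : ℕ) (n k : ℤ) : MeasurableSet (dyadicI d n k) :=
  measurableSet_Ico

lemma volume_dyadicI (hd : 0 < d) (n k : ℤ) : volume.real (dyadicI d n k) = (d : ℝ) ^ (-n) := by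
  rw [measureReal_def, dyadicI, Real.volume_Ico, ENNReal.toReal_ofReal
    (by have := zpow_pos (by exact_mod_cast hd : (0 : ℝ) < d) (-n); nlinarith)]
  ring

end DAdicIntervals

section StepFunctions

/-- `F_m`-measurability: `g` is constant on every interval `I_{m,k}`. -/
def IsStep (d : ℕ) (m : ℤ) (g : ℝ → ℂ) : Prop :=
  ∀ x y, dIdx d m x = dIdx d m y → g x = g y

lemma IsStep.mono (hd : 0 < d) {m n : ℤ} (hmn : m ≤ n) {g : ℝ → ℂ} (hg : IsStep d m g) :
    IsStep d n g := fun x y hxy =>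
  hg x y (by rw [dIdx_eq_ediv hd hmn x, dIdx_eq_ediv hd hmn y, hxy])

lemma IsStep.mul {m : ℤ} {g h : ℝ → ℂ} (hg : IsStep d m g) (hh : IsStep d m h) :
    IsStep d m (fun x => g x * h x) := fun x y hxy =>
  congrArg₂ (· * ·) (hg x y hxy) (hh x y hxy)

lemma isStep_condExpD (m : ℤ) (g : ℝ → ℂ) : IsStep d m (condExpD d m g) := fun x y hxy => by
  simp only [condExpD, hxy]

lemma isStep_mdiff (hd : 0 < d) (k : ℤ) (g : ℝ → ℂ) : IsStep d k (mdiff d k g) :=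
  fun x y hxy => by
    simp only [mdiff, isStep_condExpD k g x y hxy,
      (isStep_condExpD (k - 1) g).mono hd (by omega) x y hxy]

lemma isStep_indicator (hd : 0 < d) {m n : ℤ} (hnm : n ≤ m) (k : ℤ) :
    IsStep d m ((dyadicI d n k).indicator fun _ => (1 : ℂ)) := by
  refine IsStep.mono hd hnm fun x y hxy => ?_
  simp only [Set.indicator, mem_dyadicI_iff hd, hxy]

end StepFunctions

section CondExp

variable {m : ℤ}

lemma condExpD_of_isStep (hd : 0 < d) {g : ℝ → ℂ} (hg : IsStep d m g) :
    condExpD d m g = g := by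
  funext x
  have hconst : ∫ t in dyadicI d m (dIdx d m x), g t = ∫ _ in dyadicI d m (dIdx d m x), g x :=
    setIntegral_congr_fun measurableSet_Ico fun t ht => hg t x ((mem_dyadicI_iff hd).1 ht)
  rw [condExpD, hconst, setIntegral_const, volume_dyadicI hd, Complex.real_smul, ← mul_assoc]
  push_cast
  rw [← zpow_add₀ (by exact_mod_cast hd.ne'), add_neg_cancel, zpow_zero, one_mul]

lemma condExpD_isStep_mul (hd : 0 < d) {g : ℝ → ℂ} (hg : IsStep d m g) (h : ℝ → ℂ) :
    condExpD d m (fun t => g t * h t) = fun x => g x * condExpD d m h x := by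
  funext x
  have hconst : ∫ t in dyadicI d m (dIdx d m x), g t * h t =
      ∫ t in dyadicI d m (dIdx d m x), g x * h t :=
    setIntegral_congr_fun measurableSet_Ico fun t ht => by
      simp only [hg t x ((mem_dyadicI_iff hd).1 ht)]
  rw [condExpD, condExpD, hconst, integral_const_mul, mul_left_comm]

lemma condExpD_zero : condExpD d m 0 = 0 := by
  funext x
  simp [condExpD]

lemma condExpD_add {g h : ℝ → ℂ} (hg : Integrable g) (hh : Integrable h) :
    condExpD d m (g + h) = condExpD d m g + condExpD d m h := by
  funext x
  simp only [condExpD, Pi.add_apply, integral_add hg.integrableOn hh.integrableOn, mul_add]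

lemma condExpD_sub {g h : ℝ → ℂ} (hg : Integrable g) (hh : Integrable h) :
    condExpD d m (g - h) = condExpD d m g - condExpD d m h := by
  funext x
  simp only [condExpD, Pi.sub_apply, integral_sub hg.integrableOn hh.integrableOn, mul_sub]

lemma condExpD_smul (c : ℂ) (g : ℝ → ℂ) : condExpD d m (c • g) = c • condExpD d m g := by
  funext x
  simp only [condExpD, Pi.smul_apply, smul_eq_mul, integral_const_mul, mul_left_comm]

lemma condExpD_finset_sum {ι : Type*} (s : Finset ι) {F : ι → ℝ → ℂ}
    (hF : ∀ i ∈ s, Integrable (F i)) (x : ℝ) :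
    condExpD d m (fun t => ∑ i ∈ s, F i t) x = ∑ i ∈ s, condExpD d m (F i) x := by
  rw [condExpD, integral_finsetSum s fun i hi => (hF i hi).integrableOn, Finset.mul_sum]
  rfl

lemma condExpD_indicator (hd : 0 < d) {n : ℤ} (hmn : m ≤ n) (k : ℤ) :
    condExpD d m ((dyadicI d n k).indicator fun _ => (1 : ℂ)) =
      (d : ℂ) ^ (m - n) •
        (dyadicI d m (k / (d : ℤ) ^ (n - m).toNat)).indicator fun _ => (1 : ℂ) := by
  funext x
  rw [condExpD, setIntegral_indicator (measurableSet_dyadicI d n k), dyadicI_inter_dyadicI hd hmn,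
    Pi.smul_apply, smul_eq_mul]
  simp only [Set.indicator, mem_dyadicI_iff hd]
  split_ifs
  · rw [setIntegral_const, volume_dyadicI hd, Complex.real_smul, mul_one, mul_one]
    push_cast
    rw [← zpow_add₀ (by exact_mod_cast hd.ne'), sub_eq_add_neg]
  · simp

end CondExp

section DAdicSimple

def dAdicSimple (d : ℕ) : Submodule ℂ (ℝ → ℂ) :=
  Submodule.span ℂ (Set.range fun p : ℤ × ℤ => (dyadicI d p.1 p.2).indicator fun _ => (1 : ℂ))

lemma indicator_mem_dAdicSimple (n k : ℤ) :
    ((dyadicI d n k).indicator fun _ => (1 : ℂ)) ∈ dAdicSimple d :=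
  Submodule.subset_span ⟨(n, k), rfl⟩

lemma integrable_of_mem_dAdicSimple {g : ℝ → ℂ} (hg : g ∈ dAdicSimple d) : Integrable g := by
  induction hg using Submodule.span_induction with
  | mem _ h =>
    obtain ⟨⟨n, k⟩, rfl⟩ := h
    refine IntegrableOn.integrable_indicator ?_ (measurableSet_dyadicI d n k)
    exact integrableOn_const (by simp [dyadicI, Real.volume_Ico])
  | zero => exact integrable_zero _ _ _
  | add _ _ _ _ hg hh => exact hg.add hh
  | smul c _ _ hg => exact hg.smul c

lemma indicator_mul_indicator_mem_dAdicSimple (hd : 0 < d) (m j n k : ℤ) :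
    ((dyadicI d m j).indicator fun _ => (1 : ℂ)) * (dyadicI d n k).indicator (fun _ => 1) ∈
      dAdicSimple d := by
  wlog hmn : m ≤ n generalizing m j n k
  · rw [mul_comm]
    exact this n k m j (by omega)
  have hprod : ((dyadicI d m j).indicator fun _ => (1 : ℂ)) * (dyadicI d n k).indicator (fun _ => 1)
      = (dyadicI d m j ∩ dyadicI d n k).indicator fun _ => 1 :=
    Set.inter_indicator_one.symm
  rw [hprod, dyadicI_inter_dyadicI hd hmn]
  split_ifs
  · exact indicator_mem_dAdicSimple n k
  · rw [Set.indicator_empty]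
    exact zero_mem _

lemma mul_mem_dAdicSimple (hd : 0 < d) {g h : ℝ → ℂ} (hg : g ∈ dAdicSimple d)
    (hh : h ∈ dAdicSimple d) : (fun x => g x * h x) ∈ dAdicSimple d := by
  have hgh := Submodule.mul_mem_mul hg hh
  rw [dAdicSimple, Submodule.span_mul_span] at hgh
  refine Submodule.span_le.2 ?_ hgh
  rintro _ ⟨_, ⟨⟨m, j⟩, rfl⟩, _, ⟨⟨n, k⟩, rfl⟩, rfl⟩
  exact indicator_mul_indicator_mem_dAdicSimple hd m j n k

lemma condExpD_mem_dAdicSimple (hd : 0 < d) (m : ℤ) {g : ℝ → ℂ} (hg : g ∈ dAdicSimple d) :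
    condExpD d m g ∈ dAdicSimple d := by
  induction hg using Submodule.span_induction with
  | mem _ h =>
    obtain ⟨⟨n, k⟩, rfl⟩ := h
    rcases le_total n m with hnm | hmn
    · rw [condExpD_of_isStep hd (isStep_indicator hd hnm k)]
      exact indicator_mem_dAdicSimple n k
    · rw [condExpD_indicator hd hmn k]
      exact Submodule.smul_mem _ _ (indicator_mem_dAdicSimple _ _)
  | zero =>
    rw [condExpD_zero]
    exact zero_mem _
  | add g h hg hh hg' hh' =>
    rw [condExpD_add (integrable_of_mem_dAdicSimple hg) (integrable_of_mem_dAdicSimple hh)]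
    exact add_mem hg' hh'
  | smul c _ _ hg => 
    rw [condExpD_smul]
    exact Submodule.smul_mem _ c hg

lemma mdiff_mem_dAdicSimple (hd : 0 < d) (j : ℤ) {g : ℝ → ℂ} (hg : g ∈ dAdicSimple d) :
    mdiff d j g ∈ dAdicSimple d :=
  sub_mem (condExpD_mem_dAdicSimple hd j hg) (condExpD_mem_dAdicSimple hd (j - 1) hg)

lemma condExpD_condExpD_of_le (hd : 0 < d) {m n : ℤ} (hmn : m ≤ n) {g : ℝ → ℂ}
    (hg : g ∈ dAdicSimple d) : condExpD d m (condExpD d n g) = condExpD d m g := by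
  induction hg using Submodule.span_induction with
  | mem _ h =>
    obtain ⟨⟨N, K⟩, rfl⟩ := h
    rcases le_total N n with hNn | hnN
    · rw [condExpD_of_isStep hd (isStep_indicator hd hNn K)]
    · have hidx : K / (d : ℤ) ^ (N - n).toNat / (d : ℤ) ^ (n - m).toNat =
          K / (d : ℤ) ^ (N - m).toNat := by
        rw [Int.ediv_ediv_of_nonneg (by positivity), ← pow_add]
        congr 2
        omega
      rw [condExpD_indicator hd hnN, condExpD_smul, condExpD_indicator hd hmn, hidx,
        condExpD_indicator hd (hmn.trans hnN), smul_smul, ← zpow_add₀ (by exact_mod_cast hd.ne')]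
      ring_nf
  | zero => simp only [condExpD_zero]
  | add g h hg hh hg' hh' =>
    have hgi := integrable_of_mem_dAdicSimple hg
    have hhi := integrable_of_mem_dAdicSimple hh
    rw [condExpD_add hgi hhi, condExpD_add hgi hhi,
      condExpD_add (integrable_of_mem_dAdicSimple (condExpD_mem_dAdicSimple hd n hg))
        (integrable_of_mem_dAdicSimple (condExpD_mem_dAdicSimple hd n hh)), hg', hh']
  | smul c _ _ hg => rw [condExpD_smul, condExpD_smul, condExpD_smul, hg]

lemma condExpD_mdiff_of_lt (hd : 0 < d) {m j : ℤ} (hmj : m < j) {g : ℝ → ℂ}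
    (hg : g ∈ dAdicSimple d) : condExpD d m (mdiff d j g) = 0 := by
  change condExpD d m (condExpD d j g - condExpD d (j - 1) g) = 0
  rw [condExpD_sub (integrable_of_mem_dAdicSimple (condExpD_mem_dAdicSimple hd j hg))
    (integrable_of_mem_dAdicSimple (condExpD_mem_dAdicSimple hd (j - 1) hg)),
    condExpD_condExpD_of_le hd hmj.le hg, condExpD_condExpD_of_le hd (by omega) hg, sub_self]

end DAdicSimple

section MartingaleDifferences

variable {w : ℝ → ℂ}

lemma condExpD_isStep_mul_mdiff (hd : 0 < d) {j : ℤ} {u : ℝ → ℂ} (hu : IsStep d (j - 1) u)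
    (hu' : u ∈ dAdicSimple d) (hw : w ∈ dAdicSimple d) (m : ℤ) (x : ℝ) :
    condExpD d m (fun t => u t * mdiff d j w t) x = if j ≤ m then u x * mdiff d j w x else 0 := by
  split_ifs with hjm
  · rw [condExpD_of_isStep hd ((hu.mono hd (by omega)).mul ((isStep_mdiff hd j w).mono hd hjm))]
  · have hprod : (fun t => u t * mdiff d j w t) ∈ dAdicSimple d :=
      mul_mem_dAdicSimple hd hu' (mdiff_mem_dAdicSimple hd j hw)
    rw [← condExpD_condExpD_of_le hd (show m ≤ j - 1 by omega) hprod, condExpD_isStep_mul hd hu,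
      condExpD_mdiff_of_lt hd (by omega) hw]
    simp [← Pi.zero_def, condExpD_zero]

variable {u : ℤ → ℝ → ℂ}

lemma condExpD_sum_isStep_mul_mdiff (hd : 0 < d) (hu : ∀ j, IsStep d (j - 1) (u j))
    (hu' : ∀ j, u j ∈ dAdicSimple d) (hw : w ∈ dAdicSimple d) (s : Finset ℤ) (m : ℤ) (x : ℝ) :
    condExpD d m (fun t => ∑ j ∈ s, u j t * mdiff d j w t) x =
      ∑ j ∈ s with j ≤ m, u j x * mdiff d j w x := by
  rw [condExpD_finset_sum s fun j _ => integrable_of_mem_dAdicSimple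
    (mul_mem_dAdicSimple hd (hu' j) (mdiff_mem_dAdicSimple hd j hw)), Finset.sum_filter]
  exact Finset.sum_congr rfl fun j _ => condExpD_isStep_mul_mdiff hd (hu j) (hu' j) hw m x

lemma mdiff_sum_isStep_mul_mdiff (hd : 0 < d) (hu : ∀ j, IsStep d (j - 1) (u j))
    (hu' : ∀ j, u j ∈ dAdicSimple d) (hw : w ∈ dAdicSimple d) (s : Finset ℤ) (k : ℤ) (x : ℝ) :
    mdiff d k (fun t => ∑ j ∈ s, u j t * mdiff d j w t) x =
      if k ∈ s then u k x * mdiff d k w x else 0 := by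
  rw [mdiff, condExpD_sum_isStep_mul_mdiff hd hu hu' hw s,
    condExpD_sum_isStep_mul_mdiff hd hu hu' hw s, Finset.sum_filter, Finset.sum_filter,
    ← Finset.sum_sub_distrib, ← Finset.sum_ite_eq s k fun j => u j x * mdiff d j w x]
  refine Finset.sum_congr rfl fun j _ => ?_
  split_ifs <;> first | omega | ring

end MartingaleDifferences

lemma condExpD_mdiff_mul_condExpD (hd : 0 < d) {b f : ℝ → ℂ} (hb : b ∈ dAdicSimple d)
    (hf : f ∈ dAdicSimple d) (j m : ℤ) (x : ℝ) :
    condExpD d m (fun t => mdiff d j b t * condExpD d j f t) x =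
      if j ≤ m then mdiff d j b x * condExpD d j f x
      else condExpD d m (fun t => mdiff d j b t * mdiff d j f t) x := by
  split_ifs with hjm
  · rw [condExpD_of_isStep hd (((isStep_mdiff hd j b).mul (isStep_condExpD j f)).mono hd hjm)]
  · have hsplit : (fun t => mdiff d j b t * condExpD d j f t) =
        (fun t => mdiff d j b t * mdiff d j f t) +
          fun t => condExpD d (j - 1) f t * mdiff d j b t := by
      funext t
      simp only [mdiff, Pi.add_apply]
      ring
    have hfj := condExpD_mem_dAdicSimple hd (j - 1) hf
    rw [hsplit, condExpD_add
      (integrable_of_mem_dAdicSimple (mul_mem_dAdicSimple hd (mdiff_mem_dAdicSimple hd j hb)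
        (mdiff_mem_dAdicSimple hd j hf)))
      (integrable_of_mem_dAdicSimple (mul_mem_dAdicSimple hd hfj (mdiff_mem_dAdicSimple hd j hb))),
      Pi.add_apply, condExpD_isStep_mul_mdiff hd (isStep_condExpD _ f) hfj hb, if_neg hjm,
      add_zero]

section Haar

lemma haar_eq_sum (d : ℕ) (n k : ℤ) (i : ℕ) :
    haar d n k i = ∑ j ∈ Finset.range d,
      ((Real.sqrt ((d : ℝ) ^ n) : ℂ) *
          Complex.exp (2 * (Real.pi : ℂ) * Complex.I / (d : ℂ)) ^ (i * (j + 1))) •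
        (dyadicI d (n + 1) (k * d + j)).indicator fun _ => (1 : ℂ) := by
  funext x
  simp only [haar, Finset.sum_apply, Pi.smul_apply, smul_eq_mul, Finset.mul_sum, mul_assoc]

lemma haar_mem_dAdicSimple (n k : ℤ) (i : ℕ) : haar d n k i ∈ dAdicSimple d := by
  rw [haar_eq_sum]
  exact Submodule.sum_mem _ fun j _ => Submodule.smul_mem _ _ (indicator_mem_dAdicSimple _ _)

lemma isStep_haar (hd : 0 < d) (n k : ℤ) (i : ℕ) : IsStep d (n + 1) (haar d n k i) := by
  intro x y hxy
  simp only [haar, Set.indicator, mem_dyadicI_iff hd, hxy]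

lemma sum_rootOfUnity_pow_eq_zero {i : ℕ} (hi1 : 1 ≤ i) (hi2 : i ≤ d - 1) :
    ∑ j ∈ Finset.range d, Complex.exp (2 * (Real.pi : ℂ) * Complex.I / (d : ℂ)) ^ (i * (j + 1)) =
      0 := by
  set ω := Complex.exp (2 * (Real.pi : ℂ) * Complex.I / (d : ℂ))
  have hω : IsPrimitiveRoot ω d := Complex.isPrimitiveRoot_exp d (by omega)
  have hωi : ω ^ i ≠ 1 := hω.pow_ne_one_of_pos_of_lt (by omega) (by omega)
  have hωid : (ω ^ i) ^ d = 1 := by rw [← pow_mul, mul_comm, pow_mul, hω.pow_eq_one, one_pow]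
  simp_rw [pow_mul, pow_succ, ← Finset.sum_mul, geom_sum_eq hωi, hωid, sub_self, zero_div,
    zero_mul]

lemma condExpD_haar_self (hd : 0 < d) (n k : ℤ) {i : ℕ} (hi1 : 1 ≤ i) (hi2 : i ≤ d - 1) :
    condExpD d n (haar d n k i) = 0 := by
  have hparent : ∀ j ∈ Finset.range d, (k * d + j) / (d : ℤ) ^ (n + 1 - n).toNat = k := by
    intro j hj
    have hj' : (j : ℤ) < d := by exact_mod_cast Finset.mem_range.1 hj
    rw [show (n + 1 - n).toNat = 1 by omega, pow_one, add_comm,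
      Int.add_mul_ediv_right _ _ (by exact_mod_cast hd.ne'),
      Int.ediv_eq_zero_of_lt (by positivity) hj', zero_add]
  funext x
  rw [haar_eq_sum, Finset.sum_fn, condExpD_finset_sum _ fun j _ => integrable_of_mem_dAdicSimple
    (Submodule.smul_mem _ _ (indicator_mem_dAdicSimple _ _))]
  simp_rw [condExpD_smul, condExpD_indicator hd (Int.le_add_one le_rfl)]
  rw [Finset.sum_congr rfl fun j hj => by rw [hparent j hj]]
  simp only [Pi.smul_apply, smul_eq_mul, Pi.zero_apply]
  rw [← Finset.sum_mul, ← Finset.mul_sum, sum_rootOfUnity_pow_eq_zero hi1 hi2, mul_zero, zero_mul]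

end Haar

section BandLimited

def IsBandLimited (d : ℕ) (lo hi : ℤ) (g : ℝ → ℂ) : Prop :=
  (∀ m ≤ lo, condExpD d m g = 0) ∧ ∀ m, hi ≤ m → condExpD d m g = g

variable {lo hi : ℤ} {g : ℝ → ℂ}

lemma IsBandLimited.mdiff_eq_zero (hg : IsBandLimited d lo hi g) {k : ℤ}
    (hk : k ∉ Finset.Ioc lo hi) (x : ℝ) : mdiff d k g x = 0 := by
  rw [Finset.mem_Ioc, not_and_or, not_lt, not_le] at hk
  rcases hk with hk | hk
  · simp [mdiff, hg.1 k hk, hg.1 (k - 1) (by omega)]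
  · simp [mdiff, hg.2 k hk.le, hg.2 (k - 1) (by omega)]

lemma IsBandLimited.tsum_eq_sum_Ioc (hg : IsBandLimited d lo hi g) {F : ℤ → ℂ} {x : ℝ}
    (hF : ∀ k, mdiff d k g x = 0 → F k = 0) : ∑' k, F k = ∑ k ∈ Finset.Ioc lo hi, F k :=
  tsum_eq_sum fun k hk => hF k (hg.mdiff_eq_zero hk x)

lemma isBandLimited_haar (hd : 0 < d) (n k : ℤ) {i : ℕ} (hi1 : 1 ≤ i) (hi2 : i ≤ d - 1) :
    IsBandLimited d n (n + 1) (haar d n k i) :=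
  ⟨fun m hm => by
    rw [← condExpD_condExpD_of_le hd hm (haar_mem_dAdicSimple n k i),
      condExpD_haar_self hd n k hi1 hi2, condExpD_zero],
   fun m hm => condExpD_of_isStep hd ((isStep_haar hd n k i).mono hd hm)⟩

lemma IsHaarPoly.mem_dAdicSimple (hg : IsHaarPoly d g) : g ∈ dAdicSimple d := by
  obtain ⟨s, c, -, rfl⟩ := hg
  rw [← Finset.sum_fn]
  exact Submodule.sum_mem _ fun q _ => Submodule.smul_mem _ (c q) (haar_mem_dAdicSimple _ _ _)

lemma IsHaarPoly.eventually_isBandLimited (hd : 0 < d) (hg : IsHaarPoly d g) :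
    ∀ᶠ p : ℤ × ℤ in atBot ×ˢ atTop, IsBandLimited d p.1 p.2 g := by
  obtain ⟨s, c, hs, rfl⟩ := hg
  have hterm : ∀ q ∈ s, ∀ᶠ p : ℤ × ℤ in atBot ×ˢ atTop,
      IsBandLimited d p.1 p.2 (c q • haar d q.1 q.2.1 q.2.2) := fun q hq =>
    ((eventually_le_atBot q.1).prod_mk (eventually_ge_atTop (q.1 + 1))).mono fun p hp =>
      have hq := isBandLimited_haar hd q.1 q.2.1 (hs q hq).1 (hs q hq).2
      ⟨fun m hm => by rw [condExpD_smul, hq.1 m (hm.trans hp.1), smul_zero],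
       fun m hm => by rw [condExpD_smul, hq.2 m (hp.2.trans hm)]⟩
  have hint : ∀ q ∈ s, Integrable fun x => c q * haar d q.1 q.2.1 q.2.2 x := fun q _ =>
    integrable_of_mem_dAdicSimple (Submodule.smul_mem _ _ (haar_mem_dAdicSimple _ _ _))
  filter_upwards [(eventually_all_finset s).2 hterm] with p hp
  refine ⟨fun m hm => funext fun x => ?_, fun m hm => funext fun x => ?_⟩
  · rw [condExpD_finset_sum s hint, Pi.zero_apply]
    exact Finset.sum_eq_zero fun q hq => congrFun ((hp q hq).1 m hm) x
  · rw [condExpD_finset_sum s hint]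
    exact Finset.sum_congr rfl fun q hq => congrFun ((hp q hq).2 m hm) x

end BandLimited

section Paraproducts

variable {lo hi : ℤ} {a b f : ℝ → ℂ}

lemma piOp_eq_sum (ha : IsBandLimited d lo hi a) (g : ℝ → ℂ) (x : ℝ) :
    piOp d a g x = ∑ k ∈ Finset.Ioc lo hi, mdiff d k a x * condExpD d (k - 1) g x :=
  ha.tsum_eq_sum_Ioc fun k hk => by rw [hk, zero_mul]

lemma lamOp_eq_sum (hb : IsBandLimited d lo hi b) (f : ℝ → ℂ) (x : ℝ) :
    lamOp d b f x = ∑ k ∈ Finset.Ioc lo hi, mdiff d k b x * mdiff d k f x :=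
  hb.tsum_eq_sum_Ioc fun k hk => by rw [hk, zero_mul]

lemma rOp_eq_sum (hf : IsBandLimited d lo hi f) (b : ℝ → ℂ) (x : ℝ) :
    rOp d b f x = ∑ k ∈ Finset.Ioc lo hi, condExpD d (k - 1) b x * mdiff d k f x :=
  hf.tsum_eq_sum_Ioc fun k hk => by rw [hk, mul_zero]

lemma mdiff_piOp (hd : 0 < d) (ha : a ∈ dAdicSimple d) (hf : f ∈ dAdicSimple d)
    (ha' : IsBandLimited d lo hi a) (k : ℤ) (x : ℝ) :
    mdiff d k (piOp d a f) x = mdiff d k a x * condExpD d (k - 1) f x := by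
  have hpi : piOp d a f = fun t => ∑ j ∈ Finset.Ioc lo hi, condExpD d (j - 1) f t * mdiff d j a t :=
    funext fun t => by simp only [piOp_eq_sum ha', mul_comm]
  rw [hpi, mdiff_sum_isStep_mul_mdiff hd (fun j => isStep_condExpD _ f)
    (fun j => condExpD_mem_dAdicSimple hd _ hf) ha]
  split_ifs with hk
  · ring
  · rw [ha'.mdiff_eq_zero hk, zero_mul]

lemma rOp_piOp_eq_sum (hd : 0 < d) (ha : a ∈ dAdicSimple d) (hf : f ∈ dAdicSimple d)
    (ha' : IsBandLimited d lo hi a) (b : ℝ → ℂ) (x : ℝ) :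
    rOp d b (piOp d a f) x =
      ∑ k ∈ Finset.Ioc lo hi, condExpD d (k - 1) b x * (mdiff d k a x * condExpD d (k - 1) f x) := by
  simp only [rOp, mdiff_piOp hd ha hf ha']
  exact ha'.tsum_eq_sum_Ioc fun k hk => by rw [hk, zero_mul, mul_zero]

lemma condExpD_rOp (hd : 0 < d) (hb : b ∈ dAdicSimple d) (hf : f ∈ dAdicSimple d)
    (hf' : IsBandLimited d lo hi f) (m : ℤ) (x : ℝ) :
    condExpD d m (rOp d b f) x =
      ∑ j ∈ Finset.Ioc lo hi with j ≤ m, condExpD d (j - 1) b x * mdiff d j f x := by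
  rw [show rOp d b f = _ from funext (rOp_eq_sum hf' b)]
  exact condExpD_sum_isStep_mul_mdiff hd (fun j => isStep_condExpD _ b)
    (fun j => condExpD_mem_dAdicSimple hd _ hb) hf _ m x

lemma condExpD_piOp_add_lamOp (hd : 0 < d) (hb : b ∈ dAdicSimple d) (hf : f ∈ dAdicSimple d)
    (hb' : IsBandLimited d lo hi b) (m : ℤ) (x : ℝ) :
    condExpD d m (fun t => piOp d b f t + lamOp d b f t) x =
      ∑ j ∈ Finset.Ioc lo hi with j ≤ m, mdiff d j b x * condExpD d j f x +
        ∑ j ∈ Finset.Ioc lo hi with m < j,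
          condExpD d m (fun t => mdiff d j b t * mdiff d j f t) x := by
  have hsum : (fun t => piOp d b f t + lamOp d b f t) =
      fun t => ∑ j ∈ Finset.Ioc lo hi, mdiff d j b t * condExpD d j f t := by
    funext t
    rw [piOp_eq_sum hb', lamOp_eq_sum hb', ← Finset.sum_add_distrib]
    refine Finset.sum_congr rfl fun j _ => ?_
    simp only [mdiff]
    ring
  rw [hsum, condExpD_finset_sum _ fun j _ => integrable_of_mem_dAdicSimple
    (mul_mem_dAdicSimple hd (mdiff_mem_dAdicSimple hd j hb) (condExpD_mem_dAdicSimple hd j hf))]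
  simp_rw [condExpD_mdiff_mul_condExpD hd hb hf, Finset.sum_ite, not_le]

lemma vOp_eq_sum (hd : 0 < d) (hb : b ∈ dAdicSimple d) (hf : f ∈ dAdicSimple d)
    (ha' : IsBandLimited d lo hi a) (hb' : IsBandLimited d lo hi b) (x : ℝ) :
    vOp d a b f x = ∑ k ∈ Finset.Ioc lo hi, mdiff d k a x *
      ∑ j ∈ Finset.Ioc lo hi with k ≤ j,
        condExpD d (k - 1) (fun t => mdiff d j b t * mdiff d j f t) x := by
  rw [vOp, ha'.tsum_eq_sum_Ioc fun k hk => by rw [hk, zero_mul]]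
  refine Finset.sum_congr rfl fun k _ => congrArg _ ?_
  have hinner : (fun t => ∑' j : ℤ, if k ≤ j then mdiff d j b t * mdiff d j f t else 0) =
      fun t => ∑ j ∈ Finset.Ioc lo hi with k ≤ j, mdiff d j b t * mdiff d j f t :=
    funext fun t => by
      rw [Finset.sum_filter]
      exact hb'.tsum_eq_sum_Ioc fun j hj => by rw [hj, zero_mul, ite_self]
  rw [hinner, condExpD_finset_sum _ fun j _ => integrable_of_mem_dAdicSimple
    (mul_mem_dAdicSimple hd (mdiff_mem_dAdicSimple hd j hb) (mdiff_mem_dAdicSimple hd j hf))]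

end Paraproducts

lemma sum_Ioc_sub_pred {M : Type*} [AddCommGroup M] (G : ℤ → M) {m n : ℤ} (hmn : m ≤ n) :
    ∑ j ∈ Finset.Ioc m n, (G j - G (j - 1)) = G n - G m := by
  induction n, hmn using Int.leInduction with
  | base => simp
  | succ n hmn ih =>
    rw [← Finset.insert_Ioc_right_eq_Ioc_add_one hmn, Finset.sum_insert (by simp), ih,
      add_sub_cancel_right]
    abel

lemma sum_Ioc_condExpD_mul_mdiff_add_mdiff_mul_condExpD (b f : ℝ → ℂ) {lo n : ℤ} (hn : lo ≤ n)
    (x : ℝ) :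
    ∑ j ∈ Finset.Ioc lo n,
        (condExpD d (j - 1) b x * mdiff d j f x + mdiff d j b x * condExpD d j f x) =
      condExpD d n b x * condExpD d n f x - condExpD d lo b x * condExpD d lo f x := by
  rw [← sum_Ioc_sub_pred (fun j => condExpD d j b x * condExpD d j f x) hn]
  refine Finset.sum_congr rfl fun j _ => ?_
  simp only [mdiff]
  ring

/-- The commutator identity
`[π_a, R_b](f) = -π_a(π_b(f) + Λ_b(f)) + V_{a,b}(f)` for finite Haar polynomials. -/
theorem commutator_pi_R_identity (d : ℕ) (hd : 2 ≤ d) (a b f : ℝ → ℂ)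
    (ha : IsHaarPoly d a) (hb : IsHaarPoly d b) (hf : IsHaarPoly d f) :
    ∀ᵐ x ∂volume,
      piOp d a (rOp d b f) x - rOp d b (piOp d a f) x =
        -(piOp d a (fun t => piOp d b f t + lamOp d b f t) x) + vOp d a b f x := by
  have hd₀ : 0 < d := by omega
  obtain ⟨⟨lo, hi⟩, ha', hb', hf'⟩ := ((ha.eventually_isBandLimited hd₀).and
    ((hb.eventually_isBandLimited hd₀).and (hf.eventually_isBandLimited hd₀))).exists
  dsimp only at ha' hb' hf'
  refine .of_forall fun x => ?_
  rw [piOp_eq_sum ha', rOp_piOp_eq_sum hd₀ ha.mem_dAdicSimple hf.mem_dAdicSimple ha',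
    piOp_eq_sum ha', vOp_eq_sum hd₀ hb.mem_dAdicSimple hf.mem_dAdicSimple ha' hb',
    ← Finset.sum_sub_distrib, ← Finset.sum_neg_distrib, ← Finset.sum_add_distrib]
  refine Finset.sum_congr rfl fun k hk => ?_
  rw [condExpD_rOp hd₀ hb.mem_dAdicSimple hf.mem_dAdicSimple hf',
    condExpD_piOp_add_lamOp hd₀ hb.mem_dAdicSimple hf.mem_dAdicSimple hb']
  have hlow : {j ∈ Finset.Ioc lo hi | j ≤ k - 1} = Finset.Ioc lo (k - 1) := by
    ext j
    simp only [Finset.mem_filter, Finset.mem_Ioc] at hk ⊢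
    omega
  have htel := sum_Ioc_condExpD_mul_mdiff_add_mdiff_mul_condExpD (d := d) b f
    (show lo ≤ k - 1 by simp only [Finset.mem_Ioc] at hk; omega) x
  rw [← hlow, Finset.sum_add_distrib, hb'.1 lo le_rfl, Pi.zero_apply, zero_mul, sub_zero] at htel
  simp only [Int.sub_one_lt_iff]
  linear_combination mdiff d k a x * htel
end
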